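/- For every integer n >= 2, (n+2alpha+1)(n+2alpha+2) P_n^{(alpha+1,alpha+1)}(x) - (n+alpha)(n+alpha+1) P_{n-2}^{(alpha+1,alpha+1)}(x) = 2(n+alpha+1)(2n+2alpha+1) P_n^{(alpha,alpha)}(x). -/

import Mathlib

/-! Both sides are polynomials in `(x - 1) / 2`, so it suffices to compare coefficients. With
`s = n + 2α + 1` and `b = α + k + 1`, the `k`-th coefficient of `P_n^{(α,α)}` is
`(s)_k / k! · (b)_{n-k} / (n-k)!`. Raising `α` by one turns `s` into `s + 2` and `b` into `b + 1`,
and `(s + 2)_k · s(s + 1) = (s)_k · (s + k)(s + k + 1)` extracts the common factor `(s)_k / k!`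
(for `P_{n-2}^{(α+1,α+1)}` the parameter is `s` itself). What is left is a polynomial identity
in `b` after cancelling `(b + 1)_{n-k-2}`; the top two coefficients, where `P_{n-2}` contributes
nothing, are checked separately. -/

noncomputable def poch (a : ℝ) (k : ℕ) : ℝ := ∏ m ∈ Finset.range k, (a + m)

noncomputable def lag (α : ℝ) (n : ℕ) (x : ℝ) : ℝ :=
  ∑ k ∈ Finset.range (n + 1),
    (-1) ^ k * (poch (α + k + 1) (n - k) / (n - k).factorial) * x ^ k / k.factorial

noncomputable def jacobi (α β : ℝ) (n : ℕ) (x : ℝ) : ℝ :=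
  ∑ k ∈ Finset.range (n + 1),
    poch ((n : ℝ) + α + β + 1) k * poch (α + k + 1) (n - k) /
      (k.factorial * (n - k).factorial) * ((x - 1) / 2) ^ k

noncomputable def charlier (a : ℝ) (n : ℕ) (x : ℝ) : ℝ :=
  ∑ m ∈ Finset.range (n + 1),
    (∏ j ∈ Finset.range m, (x - (j : ℝ))) / m.factorial * (-a) ^ (n - m) / (n - m).factorial

open Finset

lemma poch_zero (a : ℝ) : poch a 0 = 1 := by simp [poch]

lemma poch_succ (a : ℝ) (k : ℕ) : poch a (k + 1) = poch a k * (a + k) :=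
  prod_range_succ _ _

lemma poch_succ' (a : ℝ) (k : ℕ) : poch a (k + 1) = a * poch (a + 1) k := by
  simp only [poch, prod_range_succ', Nat.cast_zero, add_zero, Nat.cast_succ]
  rw [mul_comm]
  exact congrArg (a * ·) (prod_congr rfl fun i _ => by ring)

lemma poch_add_two_mul (a : ℝ) (k : ℕ) :
    poch (a + 2) k * (a * (a + 1)) = poch a k * ((a + k) * (a + k + 1)) := by
  induction k with
  | zero => simp [poch_zero]
  | succ k ih =>
    rw [poch_succ, poch_succ]
    push_cast
    linear_combination (a + k + 2) * ih

lemma poch_add_two_mul_div_factorial (a : ℝ) (k : ℕ) :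
    a * (a + 1) * (poch (a + 2) k / k.factorial) =
      (a + k) * (a + k + 1) * (poch a k / k.factorial) := by
  rw [mul_div_assoc', mul_div_assoc', mul_comm _ (poch _ _), mul_comm _ (poch _ _),
    poch_add_two_mul]

/-- The theorem for the coefficient of `((x - 1) / 2) ^ k`, after the common factor `(s)_k / k!`
is taken out; here `b = α + k + 1` and `n - k = i + 2`. -/
lemma poch_div_factorial_three_term (b : ℝ) (i : ℕ) :
    (2 * b + i + 1) * (2 * b + i + 2) * (poch (b + 1) (i + 2) / (i + 2).factorial) -
        (b + i + 1) * (b + i + 2) * (poch (b + 1) i / i.factorial) =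
      2 * (b + i + 2) * (2 * b + 2 * i + 3) * (poch b (i + 2) / (i + 2).factorial) := by
  rw [poch_succ' b (i + 1), poch_succ (b + 1) (i + 1), poch_succ (b + 1) i, Nat.factorial_succ,
    Nat.factorial_succ]
  have : (i.factorial : ℝ) ≠ 0 := by positivity
  push_cast
  field_simp
  ring

noncomputable def jacobiCoeff (α β : ℝ) (n k : ℕ) : ℝ :=
  poch ((n : ℝ) + α + β + 1) k * poch (α + k + 1) (n - k) / (k.factorial * (n - k).factorial)

lemma jacobi_eq_sum_jacobiCoeff (α β : ℝ) (n : ℕ) (x : ℝ) :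
    jacobi α β n x = ∑ k ∈ range (n + 1), jacobiCoeff α β n k * ((x - 1) / 2) ^ k :=
  rfl

lemma jacobiCoeff_eq_mul (α β : ℝ) (n k : ℕ) :
    jacobiCoeff α β n k = poch ((n : ℝ) + α + β + 1) k / k.factorial *
      (poch (α + k + 1) (n - k) / (n - k).factorial) :=
  mul_div_mul_comm _ _ _ _

section Gegenbauer

variable (α : ℝ) {n k : ℕ}

lemma jacobiCoeff_self :
    jacobiCoeff α α n k = poch ((n : ℝ) + 2 * α + 1) k / k.factorial *
      (poch (α + k + 1) (n - k) / (n - k).factorial) := by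
  rw [jacobiCoeff_eq_mul, show (n : ℝ) + α + α + 1 = n + 2 * α + 1 by ring]

lemma jacobiCoeff_succ_self :
    jacobiCoeff (α + 1) (α + 1) n k = poch ((n : ℝ) + 2 * α + 1 + 2) k / k.factorial *
      (poch (α + k + 1 + 1) (n - k) / (n - k).factorial) := by
  rw [jacobiCoeff_eq_mul, show (n : ℝ) + (α + 1) + (α + 1) + 1 = n + 2 * α + 1 + 2 by ring,
    show α + 1 + k + 1 = α + k + 1 + 1 by ring]

lemma jacobiCoeff_succ_sub_jacobiCoeff_sub_two (hk : k + 2 ≤ n) :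
    (n + 2 * α + 1) * (n + 2 * α + 2) * jacobiCoeff (α + 1) (α + 1) n k -
        (n + α) * (n + α + 1) * jacobiCoeff (α + 1) (α + 1) (n - 2) k =
      2 * (n + α + 1) * (2 * n + 2 * α + 1) * jacobiCoeff α α n k := by
  obtain ⟨i, rfl⟩ : ∃ i, n = k + i + 2 := ⟨n - k - 2, by omega⟩
  have hs := poch_add_two_mul_div_factorial ((k + i + 2 : ℕ) + 2 * α + 1) k
  have hb := poch_div_factorial_three_term (α + k + 1) i
  rw [jacobiCoeff_succ_self, jacobiCoeff_succ_self, jacobiCoeff_self,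
    show k + i + 2 - 2 = k + i by omega, show k + i + 2 - k = i + 2 by omega,
    Nat.add_sub_cancel_left,
    show ((k + i : ℕ) : ℝ) + 2 * α + 1 + 2 = (k + i + 2 : ℕ) + 2 * α + 1 by push_cast; ring]
  push_cast at hs hb ⊢
  linear_combination (poch (k + i + 2 + 2 * α + 1) k / k.factorial) * hb +
    (poch (α + k + 1 + 1) (i + 2) / (i + 2).factorial) * hs

lemma jacobiCoeff_succ_of_le_of_le_succ (hk : k ≤ n) (hn : n ≤ k + 1) :
    (n + 2 * α + 1) * (n + 2 * α + 2) * jacobiCoeff (α + 1) (α + 1) n k =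
      2 * (n + α + 1) * (2 * n + 2 * α + 1) * jacobiCoeff α α n k := by
  obtain ⟨j, rfl⟩ : ∃ j, n = k + j := ⟨n - k, by omega⟩
  have hs := poch_add_two_mul_div_factorial ((k + j : ℕ) + 2 * α + 1) k
  obtain rfl | rfl : j = 0 ∨ j = 1 := by omega
  all_goals
    rw [jacobiCoeff_succ_self, jacobiCoeff_self, Nat.add_sub_cancel_left]
    simp only [poch_zero, poch_succ, Nat.factorial_zero, Nat.factorial_one] at hs ⊢
    push_cast at hs ⊢
  · linear_combination hs
  · linear_combination (α + k + 2) * hs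

end Gegenbauer

theorem stmt8 (α x : ℝ) (n : ℕ) (hn : 2 ≤ n) :
    (n + 2 * α + 1) * (n + 2 * α + 2) * jacobi (α + 1) (α + 1) n x -
      (n + α) * (n + α + 1) * jacobi (α + 1) (α + 1) (n - 2) x =
      2 * (n + α + 1) * (2 * n + 2 * α + 1) * jacobi α α n x := by
  obtain ⟨m, rfl⟩ : ∃ m, n = m + 2 := ⟨n - 2, by omega⟩
  have hsum := sum_congr rfl fun k (hk : k ∈ range (m + 1)) =>
    congrArg (· * ((x - 1) / 2) ^ k) <| jacobiCoeff_succ_sub_jacobiCoeff_sub_two α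
      (n := m + 2) (k := k) (by rw [mem_range] at hk; omega)
  have htop₁ := jacobiCoeff_succ_of_le_of_le_succ α (n := m + 2) (k := m + 1) (by omega) le_rfl
  have htop₂ := jacobiCoeff_succ_of_le_of_le_succ α (n := m + 2) (k := m + 2) le_rfl (by omega)
  simp only [jacobi_eq_sum_jacobiCoeff, sum_range_succ _ (m + 2), sum_range_succ _ (m + 1),
    Nat.add_sub_cancel]
  simp only [sub_mul, mul_assoc, ← mul_sum, sum_sub_distrib, Nat.add_sub_cancel] at hsum
  linear_combination hsum + ((x - 1) / 2) ^ (m + 1) * htop₁ + ((x - 1) / 2) ^ (m + 2) * htop₂
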